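/- arXiv:0704.3309 — 3 statements merged into one kernel-verified Lean document; each statement's English description precedes it below -/
import Mathlib

section
/- Suppose h : ℂ → ℂ is continuous, satisfies f∘h = h∘λ with |λ| > 1, h(0) = z₀, and a is a point with f^{-2}(a) = {a}. If h⁻¹(a) is nonempty, then 0 ∈ h⁻¹(a) and z₀ = a. Consequently, if f'(z₀) = λ ≠ 0 forces z₀ ∉ {z : f'(z) = 0} while f^{-2}(a) = {a} forces a to be a critical point of f, then h⁻¹(a) = ∅. -/
/-! The relation `f ∘ h = h ∘ (λ ·)` makes the closed set `h⁻¹(a)` invariant under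
`w ↦ λ⁻² w`, because `f^{-2}(a) = {a}`. Iterating from any point of `h⁻¹(a)` gives a sequence
in `h⁻¹(a)` converging to `0`, so `h 0 = a`; then `z₀ = h 0 = a`, which cannot be both a
critical and a non-critical point of `f`. -/

open Filter Function Topology

theorem Function.Semiconj.preimage_preimage_singleton {X Y : Type*} {h : X → Y} {g : X → X}
    {F : Y → Y} (hs : Semiconj h g F) {a : Y} (ha : F ⁻¹' {a} = {a}) :
    g ⁻¹' (h ⁻¹' {a}) = h ⁻¹' {a} := by
  rw [← Set.preimage_comp, hs.comp_eq, Set.preimage_comp, ha]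

theorem IsClosed.zero_mem_of_forall_smul_mem {𝕜 E : Type*} [NormedField 𝕜]
    [NormedAddCommGroup E] [NormedSpace 𝕜 E] {S : Set E} (hS : IsClosed S) {c : 𝕜}
    (hc : ‖c‖ < 1) (hcS : ∀ x ∈ S, c • x ∈ S) (hne : S.Nonempty) : (0 : E) ∈ S := by
  obtain ⟨x, hx⟩ := hne
  have hmem : ∀ n : ℕ, c ^ n • x ∈ S := fun n => by
    induction n with
    | zero => simpa using hx
    | succ n ih => simpa [pow_succ', mul_smul] using hcS _ ih
  have hlim : Tendsto (fun n : ℕ => c ^ n • x) atTop (𝓝 0) := by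
    simpa using (tendsto_pow_atTop_nhds_zero_of_norm_lt_one hc).smul_const x
  exact hS.mem_of_tendsto hlim (Eventually.of_forall hmem)

/-- If h is continuous, f∘h = h∘λ with |λ|>1, h(0)=z₀ and f^{-2}(a)={a},
then nonemptiness of h⁻¹(a) forces 0 ∈ h⁻¹(a) and z₀ = a; consequently if z₀ is not a
critical point of f while a is, then h⁻¹(a) = ∅. -/
theorem stmt_2 (f h : ℂ → ℂ) (lam z₀ a : ℂ) (hlam : 1 < ‖lam‖)
    (hcont : Continuous h) (heq : ∀ w : ℂ, f (h w) = h (lam * w)) (h0 : h 0 = z₀)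
    (ha : f^[2] ⁻¹' {a} = {a}) :
    ((h ⁻¹' {a}).Nonempty → (0 : ℂ) ∈ h ⁻¹' {a} ∧ z₀ = a) ∧
    (deriv f z₀ ≠ 0 → deriv f a = 0 → h ⁻¹' {a} = ∅) := by
  have hlam₀ : lam ≠ 0 := norm_pos_iff.mp (one_pos.trans hlam)
  have hsemi : Semiconj h (lam ^ 2 * ·) f^[2] := by
    rw [← mul_left_iterate]
    exact Semiconj.iterate_right (fun w => (heq w).symm) 2
  have hinv := hsemi.preimage_preimage_singleton ha
  have hfiber : (h ⁻¹' {a}).Nonempty → h 0 = a := fun hne =>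
    (isClosed_singleton.preimage hcont).zero_mem_of_forall_smul_mem (c := (lam ^ 2)⁻¹)
      (by simpa [norm_inv] using inv_lt_one_of_one_lt₀ (one_lt_pow₀ hlam two_ne_zero))
      (fun w hw => by rw [← hinv]; simpa [hlam₀] using hw) hne
  refine ⟨fun hne => ⟨hfiber hne, h0 ▸ hfiber hne⟩, fun hz hcrit => ?_⟩
  refine Set.not_nonempty_iff_eq_empty.mp fun hne => hz ?_
  rwa [← h0, hfiber hne]
end

section
/- Let h be a Schröder map of f at a repelling fixed point z₀ with multiplier λ, D a forward-invariant immediate attracting or parabolic basin with fixed point a, and W a component of h⁻¹(D) with λW = W. Then for every w₀ ∈ W there is a continuous arc γ : ℝ → W with γ(0) = w₀, γ(t+1) = λγ(t) for all t, |γ(t)| → ∞ and h(γ(t)) → a as t → ∞. -/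
/-!
Join `w₀` to `λ w₀` by a path `σ : [0, 1] → W` (open connected subsets of `ℂ` are
path-connected) and extend it quasi-periodically, `γ t = λ ^ ⌊t⌋ * σ (fract t)`; `γ` stays in `W`
since `W` is invariant under multiplication by `λ^{±1}`. As `h 0 = z₀ ∉ D`, `σ` avoids `0`, so
`|γ t| ≥ |λ| ^ ⌊t⌋ * min |σ| → ∞`. The functional equation gives
`h (γ t) = f^[⌊t⌋] (h (σ (fract t)))`, and `h ∘ σ` takes values in a compact subset of `D`, on
which `f^[n] → a` uniformly.
-/

open Filter Set Topology

lemma TendstoUniformlyOn.tendsto_comp_of_eventually_mem {ι α β γ : Type*} [UniformSpace β]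
    {F : ι → α → β} {a : β} {p : Filter ι} {s : Set α}
    (hF : TendstoUniformlyOn F (fun _ => a) p s) {l : Filter γ} {u : γ → ι} {g : γ → α}
    (hu : Tendsto u l p) (hg : ∀ᶠ x in l, g x ∈ s) :
    Tendsto (fun x => F (u x) (g x)) l (𝓝 a) := by
  rw [tendstoUniformlyOn_iff_tendsto] at hF
  rw [Uniform.tendsto_nhds_right]
  exact hF.comp (hu.prodMk (tendsto_principal.2 hg))

open scoped Pointwise in
lemma zpow_mul_mem_of_image_mul_eq {G₀ : Type*} [GroupWithZero G₀] {W : Set G₀} {c : G₀}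
    (hc : c ≠ 0) (hW : (c * ·) '' W = W) (n : ℤ) {w : G₀} (hw : w ∈ W) : c ^ n * w ∈ W := by
  have hstab : Units.mk0 c hc ∈ MulAction.stabilizer G₀ˣ W := hW
  have hn := (MulAction.stabilizer G₀ˣ W).zpow_mem hstab n
  rw [MulAction.mem_stabilizer_iff] at hn
  rw [← hn]
  exact ⟨w, hw, by simp⟩

section QuasiperiodicExtension

variable {K : Type*}

noncomputable def quasiperiodicExtension [DivisionRing K] (c : K) (σ : ℝ → K) (t : ℝ) : K :=
  c ^ ⌊t⌋ * σ (Int.fract t)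

section DivisionRing

variable [DivisionRing K] {c : K} {σ : ℝ → K}

lemma quasiperiodicExtension_zero : quasiperiodicExtension c σ 0 = σ 0 := by
  simp [quasiperiodicExtension]

lemma quasiperiodicExtension_add_one (hc : c ≠ 0) (t : ℝ) :
    quasiperiodicExtension c σ (t + 1) = c * quasiperiodicExtension c σ t := by
  rw [quasiperiodicExtension, quasiperiodicExtension, Int.floor_add_one, Int.fract_add_one,
    add_comm, zpow_one_add₀ hc, mul_assoc]

lemma quasiperiodicExtension_mem {W : Set K} (hc : c ≠ 0) (hW : (c * ·) '' W = W)
    (hσ : ∀ s, σ s ∈ W) (t : ℝ) : quasiperiodicExtension c σ t ∈ W :=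
  zpow_mul_mem_of_image_mul_eq hc hW _ (hσ _)

lemma tendsto_comp_quasiperiodicExtension {X : Type*} [UniformSpace X] {f : X → X} {h : K → X}
    {a : X} (hconj : Function.Semiconj h (c * ·) f)
    (hunif : TendstoUniformlyOn (fun k => f^[k]) (fun _ => a) atTop (h '' (σ '' Icc 0 1))) :
    Tendsto (fun t => h (quasiperiodicExtension c σ t)) atTop (𝓝 a) := by
  have hfract (t : ℝ) : Int.fract t ∈ Icc (0 : ℝ) 1 :=
    ⟨Int.fract_nonneg t, (Int.fract_lt_one t).le⟩
  refine (hunif.tendsto_comp_of_eventually_mem tendsto_nat_floor_atTop (Eventually.of_forall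
    fun t => mem_image_of_mem h (mem_image_of_mem σ (hfract t)))).congr' ?_
  filter_upwards [eventually_ge_atTop 0] with t ht
  rw [quasiperiodicExtension, ← Int.natCast_floor_eq_floor ht, zpow_natCast,
    ← mul_left_iterate_apply, hconj.iterate_right]

end DivisionRing

/-- The factor `c ^ ⌊t⌋` jumps, but writing `c = exp L` it equals `exp (t L) exp (-(fract t) L)`,
and `s ↦ exp (-(s L)) σ s` is a loop on `[0, 1]`. -/
lemma continuous_quasiperiodicExtension {c : ℂ} (hc : c ≠ 0) {σ : ℝ → ℂ}
    (hσ : ContinuousOn σ (Icc 0 1)) (hσ1 : σ 1 = c * σ 0) :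
    Continuous (quasiperiodicExtension c σ) := by
  set L := Complex.log c
  have hL : Complex.exp L = c := Complex.exp_log hc
  set g : ℝ → ℂ := fun s => Complex.exp (-(s * L)) * σ s
  have hg : Continuous (g ∘ Int.fract) := by
    refine ContinuousOn.comp_fract'' (by fun_prop) ?_
    simp [g, hσ1, Complex.exp_neg, hL, hc]
  have heq :
      quasiperiodicExtension c σ = fun t : ℝ => Complex.exp (t * L) * (g ∘ Int.fract) t := by
    ext t
    have hsplit : (t : ℂ) * L = (⌊t⌋ : ℤ) * L + (Int.fract t : ℝ) * L := by
      rw [← add_mul]; norm_cast; rw [Int.floor_add_fract]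
    simp only [quasiperiodicExtension, g, Function.comp_apply, hsplit, Complex.exp_add,
      Complex.exp_int_mul, hL, Complex.exp_neg]
    field_simp
  rw [heq]
  exact (Complex.continuous_exp.comp (Complex.continuous_ofReal.mul continuous_const)).mul hg

lemma tendsto_norm_quasiperiodicExtension_atTop [NormedDivisionRing K] {c : K}
    (hc : 1 < ‖c‖) {σ : ℝ → K} (hσ : ContinuousOn σ (Icc 0 1))
    (hσ0 : ∀ s ∈ Icc (0 : ℝ) 1, σ s ≠ 0) :
    Tendsto (fun t => ‖quasiperiodicExtension c σ t‖) atTop atTop := by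
  obtain ⟨s₀, hs₀, hmin⟩ := isCompact_Icc.exists_isMinOn (nonempty_Icc.2 zero_le_one)
    (continuous_norm.comp_continuousOn hσ)
  have hpow : Tendsto (fun t : ℝ => ‖c‖ ^ ⌊t⌋₊) atTop atTop :=
    (tendsto_pow_atTop_atTop_of_one_lt hc).comp tendsto_nat_floor_atTop
  refine tendsto_atTop_mono' _ ?_ (hpow.atTop_mul_const (norm_pos_iff.2 (hσ0 s₀ hs₀)))
  filter_upwards [eventually_ge_atTop 0] with t ht
  rw [quasiperiodicExtension, norm_mul, norm_zpow, ← Int.natCast_floor_eq_floor ht, zpow_natCast]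
  exact mul_le_mul_of_nonneg_left
    (hmin ⟨Int.fract_nonneg t, (Int.fract_lt_one t).le⟩) (by positivity)

end QuasiperiodicExtension

theorem stmt_8_general (f h : ℂ → ℂ) (lam z₀ a : ℂ) (hlam : 1 < ‖lam‖)
    (hh : Continuous h)
    (heq : ∀ w : ℂ, f (h w) = h (lam * w)) (h0 : h 0 = z₀)
    (D : Set ℂ) (hD : IsOpen D)
    (hbasin : TendstoLocallyUniformlyOn (fun (k : ℕ) z => f^[k] z) (fun _ => a)
      Filter.atTop D)
    (hz₀ : z₀ ∉ D)
    (W : Set ℂ) (hW : ∃ w ∈ h ⁻¹' D, W = connectedComponentIn (h ⁻¹' D) w)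
    (hWinv : (fun w => lam * w) '' W = W) :
    ∀ w₀ ∈ W, ∃ γ : ℝ → ℂ, Continuous γ ∧ (∀ t : ℝ, γ t ∈ W) ∧ γ 0 = w₀ ∧
      (∀ t : ℝ, γ (t + 1) = lam * γ t) ∧
      Filter.Tendsto (fun t => ‖γ t‖) Filter.atTop Filter.atTop ∧
      Filter.Tendsto (fun t => h (γ t)) Filter.atTop (nhds a) := by
  intro w₀ hw₀
  obtain ⟨w, hwD, rfl⟩ := hW
  set W := connectedComponentIn (h ⁻¹' D) w
  have hlam0 : lam ≠ 0 := norm_pos_iff.1 (one_pos.trans hlam)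
  have hWD : W ⊆ h ⁻¹' D := connectedComponentIn_subset _ _
  have hWpath : IsPathConnected W :=
    (hD.preimage hh).connectedComponentIn.isConnected_iff_isPathConnected.1
      (isConnected_connectedComponentIn_iff.2 hwD)
  obtain ⟨p, hp⟩ := hWpath.joinedIn w₀ hw₀ (lam * w₀) (hWinv ▸ mem_image_of_mem _ hw₀)
  have hpW (s : ℝ) : p.extend s ∈ W := hp _
  have hp0 (s : ℝ) : p.extend s ≠ 0 := fun hs => hz₀ (h0 ▸ hs ▸ hWD (hpW s))
  have hpcont : ContinuousOn p.extend (Icc 0 1) := p.continuous_extend.continuousOn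
  refine ⟨quasiperiodicExtension lam p.extend,
    continuous_quasiperiodicExtension hlam0 hpcont (by simp),
    quasiperiodicExtension_mem hlam0 hWinv hpW, quasiperiodicExtension_zero.trans p.extend_zero,
    quasiperiodicExtension_add_one hlam0,
    tendsto_norm_quasiperiodicExtension_atTop hlam hpcont fun s _ => hp0 s, ?_⟩
  have hKD : h '' (p.extend '' Icc 0 1) ⊆ D :=
    image_subset_iff.2 fun _ ⟨s, _, hs⟩ => hs ▸ hWD (hpW s)
  exact tendsto_comp_quasiperiodicExtension (fun w => (heq w).symm)
    ((tendstoLocallyUniformlyOn_iff_forall_isCompact hD).1 hbasin _ hKD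
      ((isCompact_Icc.image p.continuous_extend).image hh))

/-- For a Schröder map `h` of `f` at a repelling fixed point `z₀`, a
forward-invariant immediate attracting/parabolic basin `D` with fixed point `a`
(so the iterates of `f` converge to `a` locally uniformly on `D`), and a component `W`
of `h⁻¹(D)` with `λW = W`: through every `w₀ ∈ W` there is a continuous arc
`γ : ℝ → W` with `γ(0) = w₀`, `γ(t+1) = λγ(t)`, `|γ(t)| → ∞` and `h(γ(t)) → a`. -/
theorem stmt_8 (f h : ℂ → ℂ) (lam z₀ a : ℂ) (hlam : 1 < ‖lam‖)
    (hf : Continuous f) (hh : Continuous h)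
    (heq : ∀ w : ℂ, f (h w) = h (lam * w)) (h0 : h 0 = z₀)
    (D : Set ℂ) (hD : IsOpen D) (hDc : IsConnected D) (hfD : f '' D = D) (haD : a ∈ closure D)
    (hfa : f a = a)
    (hbasin : TendstoLocallyUniformlyOn (fun (k : ℕ) z => f^[k] z) (fun _ => a)
      Filter.atTop D)
    (hz₀ : z₀ ∉ D)
    (W : Set ℂ) (hW : ∃ w ∈ h ⁻¹' D, W = connectedComponentIn (h ⁻¹' D) w)
    (hWinv : (fun w => lam * w) '' W = W) :
    ∀ w₀ ∈ W, ∃ γ : ℝ → ℂ, Continuous γ ∧ (∀ t : ℝ, γ t ∈ W) ∧ γ 0 = w₀ ∧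
      (∀ t : ℝ, γ (t + 1) = lam * γ t) ∧
      Filter.Tendsto (fun t => ‖γ t‖) Filter.atTop Filter.atTop ∧
      Filter.Tendsto (fun t => h (γ t)) Filter.atTop (nhds a) :=
  stmt_8_general f h lam z₀ a hlam hh heq h0 D hD hbasin hz₀ W hW hWinv
end

section
/- Let h be a Schröder map with f∘h = h∘λ, h'(0) ≠ 0, |λ|>1, f(a) = a, and suppose c ∈ ℂ is a critical point of h with h(c) ≠ a. Choose t > 0 so that h is injective (hence h' nonvanishing) on {|w| < t} and ℓ ∈ ℕ with |λ^{-ℓ}c| < t. Then there exists i ∈ {0,…,ℓ-1} such that f^i(h(λ^{-ℓ}c)) is a critical point of f and f^i(h(λ^{-ℓ}c)) ≠ a. -/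
/-!
Differentiating `f^[ℓ] ∘ h = h ∘ (λ^ℓ * ·)` at `w₀ = λ⁻¹^ℓ * c` gives
`(∏ i < ℓ, f'(f^[i] (h w₀))) * h'(w₀) = λ^ℓ * h'(c) = 0`. The factor `h'(w₀)` is nonzero because
`h` is injective near `w₀`: otherwise `h - h w₀` vanishes to some order `n ≥ 2` at `w₀`, so it is
`ψ^n` for a local coordinate `ψ` centred at `w₀`, and `z ↦ z^n` is not injective near `0`.
Hence some `f'(f^[i] (h w₀))` vanishes, and `f^[i] (h w₀) ≠ a` since `f^[ℓ - i]` maps it to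
`h c ≠ a` while fixing `a`.
-/

open Complex Filter Function Metric Set
open scoped Topology

theorem Complex.not_injOn_pow_of_mem_nhds_zero {n : ℕ} (hn : 2 ≤ n) {U : Set ℂ}
    (hU : U ∈ 𝓝 0) : ¬ InjOn (· ^ n) U := by
  intro hinj
  obtain ⟨r, hr, hrU⟩ := Metric.mem_nhds_iff.mp hU
  have hω := Complex.isPrimitiveRoot_exp n (by omega)
  have hmem : ∀ z : ℂ, ‖z‖ = 1 → ((r / 2 : ℝ) : ℂ) * z ∈ U := fun z hz ↦
    hrU (by simp [hz, abs_of_pos hr]; linarith)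
  have hr₀ : ((r / 2 : ℝ) : ℂ) ≠ 0 := by exact_mod_cast (by positivity : r / 2 ≠ 0)
  have := hinj (hmem 1 (by simp)) (hmem _ (hω.norm'_eq_one (by omega)))
    (by simp only [mul_pow, one_pow, hω.pow_eq_one])
  exact hω.ne_one (by omega) (mul_left_cancel₀ hr₀ this).symm

theorem AnalyticAt.exists_eventually_pow_eq {u : ℂ → ℂ} {z₀ : ℂ} (hu : AnalyticAt ℂ u z₀)
    (hu₀ : u z₀ ≠ 0) {n : ℕ} (hn : n ≠ 0) :
    ∃ φ : ℂ → ℂ, AnalyticAt ℂ φ z₀ ∧ φ z₀ ≠ 0 ∧ ∀ᶠ z in 𝓝 z₀, φ z ^ n = u z := by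
  obtain ⟨b, hb⟩ := IsAlgClosed.exists_pow_nat_eq (u z₀) (Nat.pos_of_ne_zero hn)
  have hslit : ∀ᶠ z in 𝓝 z₀, u z / u z₀ ∈ slitPlane :=
    (hu.continuousAt.div_const _).eventually_mem <|
      isOpen_slitPlane.mem_nhds (by simp [hu₀, one_mem_slitPlane])
  refine ⟨fun z ↦ b * Complex.exp (Complex.log (u z / u z₀) / n), ?_, ?_, ?_⟩
  · exact analyticAt_const.mul ((hu.div_const.clog hslit.self_of_nhds).div_const.cexp')
  · simpa [hu₀] using fun hb₀ ↦ hu₀ (by rw [← hb, hb₀, zero_pow hn])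
  · filter_upwards [hslit] with z hz
    rw [mul_pow, ← exp_nat_mul, mul_div_cancel₀ _ (Nat.cast_ne_zero.mpr hn),
      exp_log (slitPlane_ne_zero hz), hb, mul_div_cancel₀ _ hu₀]

theorem not_injOn_of_eventually_eq {X Y : Type*} [TopologicalSpace X] {x : X}
    [(𝓝[≠] x).NeBot] {g : X → Y} (hg : ∀ᶠ z in 𝓝 x, g z = g x) {S : Set X} (hS : S ∈ 𝓝 x) :
    ¬ InjOn g S := by
  intro hinj
  obtain ⟨z, ⟨hzS, hz⟩, hzx⟩ := ((eventually_nhdsWithin_of_eventually_nhds (s := {x}ᶜ)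
    ((show ∀ᶠ z in 𝓝 x, z ∈ S from hS).and hg)).and eventually_mem_nhdsWithin).exists
  exact hzx (hinj hzS (mem_of_mem_nhds hS) hz)

theorem AnalyticAt.not_injOn_of_analyticOrderAt_sub_eq {g : ℂ → ℂ} {z₀ : ℂ}
    (hg : AnalyticAt ℂ g z₀) {n : ℕ} (hn : 2 ≤ n) (hord : analyticOrderAt (g · - g z₀) z₀ = n)
    {S : Set ℂ} (hS : S ∈ 𝓝 z₀) : ¬ InjOn g S := by
  obtain ⟨u, hu, hu₀, hgu⟩ := ((hg.fun_sub analyticAt_const).analyticOrderAt_eq_natCast).mp hord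
  obtain ⟨φ, hφ, hφ₀, hφu⟩ := hu.exists_eventually_pow_eq hu₀ (n := n) (by omega)
  set ψ : ℂ → ℂ := fun z ↦ (z - z₀) * φ z
  have hψ : HasStrictDerivAt ψ (φ z₀) z₀ := by
    simpa [ψ] using
      HasStrictDerivAt.fun_mul ((hasStrictDerivAt_id z₀).sub_const z₀) hφ.hasStrictDerivAt
  have hT : {z | z ∈ S ∧ g z - g z₀ = ψ z ^ n} ∈ 𝓝 z₀ := by
    filter_upwards [hS, hgu, hφu] with z hzS hz hzφ
    exact ⟨hzS, by rw [hz, ← hzφ, smul_eq_mul, mul_pow]⟩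
  have himg : ψ '' {z | z ∈ S ∧ g z - g z₀ = ψ z ^ n} ∈ 𝓝 0 := by
    simpa [hψ.map_nhds_eq hφ₀, ψ] using image_mem_map (m := ψ) hT
  intro hinj
  refine Complex.not_injOn_pow_of_mem_nhds_zero hn himg ?_
  rintro _ ⟨w₁, hw₁, rfl⟩ _ ⟨w₂, hw₂, rfl⟩ hpow
  rw [hinj hw₁.1 hw₂.1 (sub_left_inj.mp (hw₁.2.trans (hpow.trans hw₂.2.symm)))]

theorem AnalyticAt.deriv_ne_zero_of_injOn {g : ℂ → ℂ} {z₀ : ℂ} (hg : AnalyticAt ℂ g z₀)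
    {S : Set ℂ} (hS : S ∈ 𝓝 z₀) (hinj : InjOn g S) : deriv g z₀ ≠ 0 := by
  intro hd
  have h₂ : 2 ≤ analyticOrderAt (g · - g z₀) z₀ := by
    have h₁ : 1 ≤ analyticOrderAt (deriv g) z₀ :=
      Order.one_le_iff_ne_zero.mpr (analyticOrderAt_ne_zero.mpr ⟨hg.deriv, hd⟩)
    rw [← hg.analyticOrderAt_deriv_add_one]
    exact add_le_add_left h₁ 1
  cases hord : analyticOrderAt (g · - g z₀) z₀ with
  | top =>
    exact not_injOn_of_eventually_eq
      ((analyticOrderAt_eq_top.mp hord).mono fun _ ↦ sub_eq_zero.mp) hS hinj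
  | coe n =>
    exact hg.not_injOn_of_analyticOrderAt_sub_eq (by exact_mod_cast hord ▸ h₂) hord hS hinj

theorem hasDerivAt_iterate {𝕜 : Type*} [NontriviallyNormedField 𝕜] {f : 𝕜 → 𝕜} {x : 𝕜} {n : ℕ}
    (hf : ∀ i < n, DifferentiableAt 𝕜 f (f^[i] x)) :
    HasDerivAt f^[n] (∏ i ∈ Finset.range n, deriv f (f^[i] x)) x := by
  induction n with
  | zero => simpa using hasDerivAt_id x
  | succ n ih =>
    rw [Finset.prod_range_succ, mul_comm, iterate_succ']
    exact (hf n n.lt_succ_self).hasDerivAt.comp x (ih fun i hi ↦ hf i (by omega))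

theorem stmt_12_general (f h : ℂ → ℂ) (hf : Differentiable ℂ f) (hh : Differentiable ℂ h)
    (lam a : ℂ) (hlam : 1 < ‖lam‖) (heq : ∀ w : ℂ, f (h w) = h (lam * w))
    (hfa : f a = a) (c : ℂ) (hc : deriv h c = 0) (hca : h c ≠ a)
    (t : ℝ) (hinj : Set.InjOn h (Metric.ball 0 t))
    (ℓ : ℕ) (hℓ : ‖lam⁻¹ ^ ℓ * c‖ < t) :
    ∃ i : ℕ, i < ℓ ∧ deriv f (f^[i] (h (lam⁻¹ ^ ℓ * c))) = 0 ∧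
      f^[i] (h (lam⁻¹ ^ ℓ * c)) ≠ a := by
  set w₀ := lam⁻¹ ^ ℓ * c
  have hlam₀ : lam ≠ 0 := by rintro rfl; norm_num at hlam
  have hw₀ : lam ^ ℓ * w₀ = c := by
    rw [← mul_assoc, ← mul_pow, mul_inv_cancel₀ hlam₀, one_pow, one_mul]
  have hiter (k : ℕ) (w : ℂ) : f^[k] (h w) = h (lam ^ k * w) := by
    have hsemi : Semiconj h (lam * ·) f := fun w ↦ (heq w).symm
    rw [← (hsemi.iterate_right k).eq, mul_left_iterate_apply]
  have hchain := (hasDerivAt_iterate (n := ℓ) fun i _ ↦ hf _).comp w₀ (hh w₀).hasDerivAt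
  have hzero : deriv (f^[ℓ] ∘ h) w₀ = 0 := by
    rw [show f^[ℓ] ∘ h = (h <| lam ^ ℓ * ·) from funext (hiter ℓ), deriv_comp_mul_left, hw₀, hc,
      smul_zero]
  have hh₀ : deriv h w₀ ≠ 0 := (hh.analyticAt w₀).deriv_ne_zero_of_injOn
    (isOpen_ball.mem_nhds (mem_ball_zero_iff.mpr hℓ)) hinj
  rw [hchain.deriv, mul_eq_zero, or_iff_left hh₀] at hzero
  obtain ⟨i, hi, hcrit⟩ := Finset.prod_eq_zero_iff.mp hzero
  refine ⟨i, Finset.mem_range.mp hi, hcrit, fun hia ↦ hca ?_⟩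
  rw [← hw₀, ← hiter, ← Nat.sub_add_cancel (Finset.mem_range.mp hi).le, iterate_add_apply, hia,
    iterate_fixed hfa]

/-- If `c` is a critical point of the Schröder map `h` with `h(c) ≠ a`,
`h` is injective on `{|w| < t}` and `|λ^{-ℓ}c| < t`, then for some `i ∈ {0,…,ℓ-1}` the
point `f^i(h(λ^{-ℓ}c))` is a critical point of `f` different from `a`. -/
theorem stmt_12 (f h : ℂ → ℂ) (hf : Differentiable ℂ f) (hh : Differentiable ℂ h)
    (lam a : ℂ) (hlam : 1 < ‖lam‖) (heq : ∀ w : ℂ, f (h w) = h (lam * w))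
    (hfa : f a = a) (c : ℂ) (hc : deriv h c = 0) (hca : h c ≠ a)
    (t : ℝ) (ht : 0 < t) (hinj : Set.InjOn h (Metric.ball 0 t))
    (ℓ : ℕ) (hℓ : ‖lam⁻¹ ^ ℓ * c‖ < t) :
    ∃ i : ℕ, i < ℓ ∧ deriv f (f^[i] (h (lam⁻¹ ^ ℓ * c))) = 0 ∧
      f^[i] (h (lam⁻¹ ^ ℓ * c)) ≠ a :=
  stmt_12_general f h hf hh lam a hlam heq hfa c hc hca t hinj ℓ hℓ
end
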